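/- Let z_{k+1} = A z_k + B u_k + H (z_k ⊗ u_k) and suppose a data trajectory (u^d, z^d) of length T satisfies these dynamics with v^d_k = z^d_k ⊗ u^d_k. Then the depth-L Hankel matrix of shifted states satisfies the factorization Z_{2,L,T−L+1} = [O_L P_L Q_L] · 𝒢_L(T), where O_L, P_L, Q_L are the extended observability/controllability-type matrices and 𝒢_L(T) = [Z_{1,1,T−L+1}; U_{1,L,T−L+1}; V_{1,L,T−L+1}]. -/
import Mathlib
open Matrix

lemma state_formula {n : ℕ} (A : Matrix (Fin n) (Fin n) ℝ)
    (Z : ℕ → Fin n → ℝ) (w : ℕ → Fin n → ℝ) (T : ℕ)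
    (hdyn : ∀ k, k < T → Z (k + 1) = A *ᵥ Z k + w k) :
    ∀ i j, j + i < T → Z (j + i + 1) =
      (A ^ (i + 1)) *ᵥ Z j +
        ∑ l ∈ Finset.range (i + 1), (A ^ (i - l)) *ᵥ w (j + l) := by
  intro i
  induction i with
  | zero =>
    intro j hj
    simpa [pow_one] using hdyn j (by omega)
  | succ i ih =>
    intro j hj
    have h1 : Z (j + (i + 1) + 1) = A *ᵥ Z (j + i + 1) + w (j + i + 1) := by
      simpa [show j + (i + 1) = j + i + 1 by ring] using hdyn (j + i + 1) (by omega)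
    have hsum : A *ᵥ ∑ l ∈ Finset.range (i + 1), (A ^ (i - l)) *ᵥ w (j + l)
        = ∑ l ∈ Finset.range (i + 1), (A ^ (i + 1 - l)) *ᵥ w (j + l) := by
      rw [← mulVecLin_apply, map_sum]
      refine Finset.sum_congr rfl ?_
      intro l hl
      have h2 : i + 1 - l = (i - l) + 1 := by
        have := Finset.mem_range.mp hl; omega
      rw [h2, pow_succ', mulVecLin_apply, ← mulVec_mulVec]
    rw [h1, ih j (by omega), mulVec_add, mulVec_mulVec, ← pow_succ', hsum]
    conv_rhs => rw [Finset.sum_range_succ, Nat.sub_self, pow_zero, one_mulVec]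
    rw [add_assoc]
    rfl


/-- Kronecker product of two vectors. -/
def kron {n m : ℕ} (z : Fin n → ℝ) (u : Fin m → ℝ) : Fin n × Fin m → ℝ :=
  fun p => z p.1 * u p.2

/-- Depth-`L` Hankel matrix with `C` columns of a `T`-long vector-valued signal. -/
def hankel {α : Type} {T : ℕ} (L C : ℕ) (h : L + C ≤ T + 1) (w : Fin T → α → ℝ) :
    Matrix (Fin L × α) (Fin C) ℝ :=
  fun p j => w ⟨p.1.val + j.val, by have := p.1.isLt; have := j.isLt; omega⟩ p.2

/-- Extended observability-type matrix `O_L = [A; A²; …; A^L]`. -/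
def OL {n : ℕ} (L : ℕ) (A : Matrix (Fin n) (Fin n) ℝ) :
    Matrix (Fin L × Fin n) (Fin n) ℝ :=
  fun p b => (A ^ (p.1.val + 1)) p.2 b

/-- Lower block-triangular matrix with `(i,j)` block `A^{i-j} B`. -/
def PL {n m : ℕ} (L : ℕ) (A : Matrix (Fin n) (Fin n) ℝ)
    (B : Matrix (Fin n) (Fin m) ℝ) :
    Matrix (Fin L × Fin n) (Fin L × Fin m) ℝ :=
  fun p q => if q.1.val ≤ p.1.val then (A ^ (p.1.val - q.1.val) * B) p.2 q.2 else 0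

/-- Lower block-triangular matrix with `(i,j)` block `A^{i-j} H`. -/
def QL {n m : ℕ} (L : ℕ) (A : Matrix (Fin n) (Fin n) ℝ)
    (H : Matrix (Fin n) (Fin n × Fin m) ℝ) :
    Matrix (Fin L × Fin n) (Fin L × (Fin n × Fin m)) ℝ :=
  fun p q => if q.1.val ≤ p.1.val then (A ^ (p.1.val - q.1.val) * H) p.2 q.2 else 0

/-- Hankel factorization for the bilinear system:
`Z_{2,L,T-L+1} = [O_L P_L Q_L] ⬝ 𝒢_L(T)`, written blockwise. -/
theorem bilinear_hankel_factorization {n m L T : ℕ} (hL : 1 ≤ L) (hLT : L ≤ T)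
    (A : Matrix (Fin n) (Fin n) ℝ) (B : Matrix (Fin n) (Fin m) ℝ)
    (H : Matrix (Fin n) (Fin n × Fin m) ℝ)
    (ud : Fin T → Fin m → ℝ) (zd : Fin (T + 1) → Fin n → ℝ)
    (hdata : ∀ k : Fin T, zd k.succ =
      A *ᵥ zd k.castSucc + B *ᵥ ud k + H *ᵥ kron (zd k.castSucc) (ud k)) :
    (Matrix.of fun (p : Fin L × Fin n) (j : Fin (T - L + 1)) =>
        zd ⟨p.1.val + j.val + 1, by have := p.1.isLt; have := j.isLt; omega⟩ p.2) =
      OL L A * (Matrix.of fun (a : Fin n) (j : Fin (T - L + 1)) =>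
          zd ⟨j.val, by have := j.isLt; omega⟩ a)
        + PL L A B * hankel L (T - L + 1) (by omega) ud
        + QL L A H * hankel L (T - L + 1) (by omega)
            (fun k : Fin T => kron (zd k.castSucc) (ud k)) := by
  classical
  set Ud : ℕ → Fin m → ℝ := fun k => if h : k < T then ud ⟨k, h⟩ else 0 with hUdef
  set Vd : ℕ → Fin n × Fin m → ℝ := fun k =>
    if h : k < T then kron (zd ((⟨k, h⟩ : Fin T).castSucc)) (ud ⟨k, h⟩) else 0 with hVdef
  set Z : ℕ → Fin n → ℝ := fun k => if h : k < T + 1 then zd ⟨k, h⟩ else 0 with hZdef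
  set w : ℕ → Fin n → ℝ := fun k => B *ᵥ Ud k + H *ᵥ Vd k with hwdef
  have hdyn : ∀ k, k < T → Z (k + 1) = A *ᵥ Z k + w k := by
    intro k hk
    simp only [hZdef, hwdef, hUdef, hVdef, dif_pos hk, dif_pos (show k < T + 1 by omega),
      dif_pos (show k + 1 < T + 1 by omega)]
    have := hdata ⟨k, hk⟩
    rw [Fin.succ] at this
    rw [this, add_assoc]
    rfl
  ext p j
  obtain ⟨i, a⟩ := p
  have hij : (j : ℕ) + (i : ℕ) < T := by
    have := i.isLt; have := j.isLt; omega
  have key := congrFun (state_formula A Z w T hdyn i j hij) a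
  have hLHS : (Matrix.of fun (p : Fin L × Fin n) (j : Fin (T - L + 1)) =>
        zd ⟨p.1.val + j.val + 1, by have := p.1.isLt; have := j.isLt; omega⟩ p.2) (i, a) j
      = Z ((j : ℕ) + (i : ℕ) + 1) a := by
    simp only [Matrix.of_apply, hZdef, dif_pos (show (j : ℕ) + (i : ℕ) + 1 < T + 1 by omega)]
    congr 1
    exact Fin.ext (by simp; omega)
  rw [hLHS, key]
  have hO : (A ^ ((i : ℕ) + 1) *ᵥ Z (j : ℕ)) a
      = (OL L A * (Matrix.of fun (a : Fin n) (j : Fin (T - L + 1)) =>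
          zd ⟨j.val, by have := j.isLt; omega⟩ a)) (i, a) j := by
    simp only [hZdef, dif_pos (show (j : ℕ) < T + 1 by omega), mul_apply, mulVec, dotProduct,
      OL, Matrix.of_apply]
  have hP : (PL L A B * hankel L (T - L + 1) (by omega) ud) (i, a) j
      = ∑ l ∈ Finset.range ((i : ℕ) + 1), ((A ^ ((i : ℕ) - l) * B) *ᵥ Ud ((j : ℕ) + l)) a := by
    rw [mul_apply, Fintype.sum_prod_type]
    have hh : ∀ (l : Fin L) (b : Fin m),
        hankel L (T - L + 1) (by omega) ud (l, b) j = Ud ((l : ℕ) + (j : ℕ)) b := by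
      intro l b
      have hlt : (l : ℕ) + (j : ℕ) < T := by have := l.isLt; have := j.isLt; omega
      simp only [hankel, hUdef, dif_pos hlt]
    simp only [hh, PL]
    rw [Fin.sum_univ_eq_sum_range
      (fun l => ∑ b, (if l ≤ (i : ℕ) then (A ^ ((i : ℕ) - l) * B) a b else 0) * Ud (l + (j : ℕ)) b) L]
    rw [← Finset.sum_subset (Finset.range_subset_range.mpr i.isLt)
      (by intro x _ hx
          have : ¬ x ≤ (i : ℕ) := by simp at hx; omega
          simp [this])]
    refine Finset.sum_congr rfl ?_
    intro l hl
    have hle : l ≤ (i : ℕ) := by have := Finset.mem_range.mp hl; omega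
    simp only [if_pos hle, mulVec, dotProduct]
    rw [show l + (j : ℕ) = (j : ℕ) + l by omega]
  have hQ : (QL L A H * hankel L (T - L + 1) (by omega)
        (fun k : Fin T => kron (zd k.castSucc) (ud k))) (i, a) j
      = ∑ l ∈ Finset.range ((i : ℕ) + 1), ((A ^ ((i : ℕ) - l) * H) *ᵥ Vd ((j : ℕ) + l)) a := by
    rw [mul_apply, Fintype.sum_prod_type]
    have hh : ∀ (l : Fin L) (c : Fin n × Fin m),
        hankel L (T - L + 1) (by omega) (fun k : Fin T => kron (zd k.castSucc) (ud k)) (l, c) j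
          = Vd ((l : ℕ) + (j : ℕ)) c := by
      intro l c
      have hlt : (l : ℕ) + (j : ℕ) < T := by have := l.isLt; have := j.isLt; omega
      simp only [hankel, hVdef, dif_pos hlt]
    simp only [hh, QL]
    rw [Fin.sum_univ_eq_sum_range
      (fun l => ∑ c, (if l ≤ (i : ℕ) then (A ^ ((i : ℕ) - l) * H) a c else 0) * Vd (l + (j : ℕ)) c) L]
    rw [← Finset.sum_subset (Finset.range_subset_range.mpr i.isLt)
      (by intro x _ hx
          have : ¬ x ≤ (i : ℕ) := by simp at hx; omega
          simp [this])]
    refine Finset.sum_congr rfl ?_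
    intro l hl
    have hle : l ≤ (i : ℕ) := by have := Finset.mem_range.mp hl; omega
    simp only [if_pos hle, mulVec, dotProduct]
    rw [show l + (j : ℕ) = (j : ℕ) + l by omega]
  rw [Pi.add_apply, hO, Matrix.add_apply, Matrix.add_apply, add_assoc]
  congr 1
  rw [hP, hQ, Finset.sum_apply, ← Finset.sum_add_distrib]
  refine Finset.sum_congr rfl ?_
  intro l hl
  rw [hwdef]
  simp only [mulVec_add, Pi.add_apply, mulVec_mulVec]
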